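/- arXiv:2308.15465 — 2 statements merged into one kernel-verified Lean document; each statement's English description precedes it below -/
import Mathlib

section
/- Let i⃗₀, i⃗₁, i⃗₂ be pairwise disjoint lists of distinct level variables of lengths p₀, p₁, p₂. The flat level equation 0 ⊔ i⃗₀ ⊔ i⃗₁ ≐ 0 ⊔ i⃗₀ ⊔ i⃗₂ admits a most general unifier θ given by: i₀ᵏ ↦ x_k ⊔ (⊔_{n∈[p₁]} y_{k,n}) ⊔ (⊔_{m∈[p₂]} z_{k,m}), i₁ⁿ ↦ (⊔_{k∈[p₀]} y_{k,n}) ⊔ (⊔_{m∈[p₂]} v_{n,m}), i₂ᵐ ↦ (⊔_{k∈[p₀]} z_{k,m}) ⊔ (⊔_{n∈[p₁]} v_{n,m}), where the x, y, z, v are pairwise distinct fresh variables. -/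
/-- Universe level expressions: `l ::= i | 0 | S l | l ⊔ l'`. -/
inductive Lvl : Type
  | var : ℕ → Lvl
  | zero : Lvl
  | succ : Lvl → Lvl
  | max : Lvl → Lvl → Lvl
  deriving DecidableEq

namespace Lvl

/-- Interpretation of a level under an assignment `φ` of naturals to variables. -/
def eval (φ : ℕ → ℕ) : Lvl → ℕ
  | .var i => φ i
  | .zero => 0
  | .succ l => l.eval φ + 1
  | .max a b => Nat.max (a.eval φ) (b.eval φ)

/-- Semantic equivalence: equal value under every assignment. -/
def Equiv (l l' : Lvl) : Prop := ∀ φ : ℕ → ℕ, l.eval φ = l'.eval φ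

/-- Application of a level substitution. -/
def subst (θ : ℕ → Lvl) : Lvl → Lvl
  | .var i => θ i
  | .zero => .zero
  | .succ l => .succ (l.subst θ)
  | .max a b => .max (a.subst θ) (b.subst θ)

/-- Free variables of a level. -/
def fv : Lvl → Finset ℕ
  | .var i => {i}
  | .zero => ∅
  | .succ l => l.fv
  | .max a b => a.fv ∪ b.fv

/-- The constant level `n`, i.e. `Sⁿ 0`. -/
def const (n : ℕ) : Lvl := Lvl.succ^[n] Lvl.zero

/-- The level `n + i`, i.e. `Sⁿ i`. -/
def atom (n i : ℕ) : Lvl := Lvl.succ^[n] (Lvl.var i)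

end Lvl

/-- `θ` is a unifier of the equation `l₁ ≐ l₂`. -/
def Unifies (θ : ℕ → Lvl) (l₁ l₂ : Lvl) : Prop := Lvl.Equiv (l₁.subst θ) (l₂.subst θ)

/-- `θ` is a most general unifier of the equation `l₁ ≐ l₂`. -/
def IsMGU (θ : ℕ → Lvl) (l₁ l₂ : Lvl) : Prop :=
  Unifies θ l₁ l₂ ∧ ∀ τ, Unifies τ l₁ l₂ →
    ∃ θ' : ℕ → Lvl, ∀ i ∈ l₁.fv ∪ l₂.fv, Lvl.Equiv ((θ i).subst θ') (τ i)

/-- The level `p ⊔ (n₁ + i₁) ⊔ ... ⊔ (n_m + i_m)` given by canonical-form data. -/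
def buildCanon (p : ℕ) (L : List (ℕ × ℕ)) : Lvl :=
  L.foldr (fun a acc => Lvl.max (Lvl.atom a.1 a.2) acc) (Lvl.const p)

/-- The equation `buildCanon p₁ L₁ ≐ buildCanon p₂ L₂` is in canonical form:
both sides canonical (coefficients bounded by the constant coefficient, variables
pairwise distinct), shared variables have equal coefficients on both sides, and
some coefficient on some side equals `0`. -/
def CanonEqn (p₁ : ℕ) (L₁ : List (ℕ × ℕ)) (p₂ : ℕ) (L₂ : List (ℕ × ℕ)) : Prop :=
  (∀ a ∈ L₁, a.1 ≤ p₁) ∧ (L₁.map Prod.snd).Nodup ∧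
  (∀ a ∈ L₂, a.1 ≤ p₂) ∧ (L₂.map Prod.snd).Nodup ∧
  (∀ a ∈ L₁, ∀ b ∈ L₂, a.2 = b.2 → a.1 = b.1) ∧
  0 ∈ (p₁ :: p₂ :: (L₁ ++ L₂).map Prod.fst)

/-- Join of a list of levels. -/
def sup (L : List Lvl) : Lvl := L.foldr Lvl.max Lvl.zero

/-! Ordered pointwise, levels behave like a distributive lattice whose constants and atoms
`n + i` are sup-prime: every level is `c ⊔ ⊔ (nₐ + iₐ)`, so `const c ≤ ⊔ L` forces `c = 0` or
`const c` below a member of `L`, and likewise for atoms. Given a unifier `τ`, send `x_k` to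
`τ(i₀ᵏ)` and each of `y, z, v` to a meet of the `τ`-images of the two variables it links.
For `j ∈ i⃗₁`, `τ j` lies below the join of `τ` over `i⃗₀ ++ i⃗₂` (as `τ` unifies the equation),
hence below the join of its meets with those images, which is `θ j` under this substitution;
the case `j ∈ i⃗₂` is symmetric, and for `j ∈ i⃗₀` the term `x_k` already gives `τ j`. -/
namespace Lvl

instance : Preorder Lvl where
  le l r := ∀ φ, l.eval φ ≤ r.eval φ
  le_refl _ _ := le_rfl
  le_trans _ _ _ h h' φ := (h φ).trans (h' φ)

theorem le_def {l r : Lvl} : l ≤ r ↔ ∀ φ, l.eval φ ≤ r.eval φ := Iff.rfl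

theorem equiv_iff_le_and_le {l r : Lvl} : l.Equiv r ↔ l ≤ r ∧ r ≤ l := by
  simp only [Equiv, le_def, ← forall_and, le_antisymm_iff]

@[simp] theorem eval_max (φ : ℕ → ℕ) (a b : Lvl) :
    (Lvl.max a b).eval φ = a.eval φ ⊔ b.eval φ := rfl

theorem eval_mono {φ ψ : ℕ → ℕ} (h : φ ≤ ψ) (l : Lvl) : l.eval φ ≤ l.eval ψ := by
  induction l with
  | var i => exact h i
  | zero => exact le_rfl
  | succ l ih => exact Nat.succ_le_succ ih
  | max a b iha ihb => exact max_le_max iha ihb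

theorem zero_le (r : Lvl) : zero ≤ r := fun _ => Nat.zero_le _

theorem max_le_iff {a b r : Lvl} : Lvl.max a b ≤ r ↔ a ≤ r ∧ b ≤ r := by
  simp only [le_def, eval_max, _root_.max_le_iff, forall_and]

theorem le_max_left (a b : Lvl) : a ≤ Lvl.max a b := fun _ => _root_.le_max_left _ _

theorem le_max_right (a b : Lvl) : b ≤ Lvl.max a b := fun _ => _root_.le_max_right _ _

theorem max_equiv_left {a b : Lvl} (h : b ≤ a) : (Lvl.max a b).Equiv a :=
  equiv_iff_le_and_le.2 ⟨max_le_iff.2 ⟨le_rfl, h⟩, le_max_left a b⟩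

theorem eval_succ_iterate (n : ℕ) (l : Lvl) (φ : ℕ → ℕ) :
    (succ^[n] l).eval φ = l.eval φ + n := by
  induction n with
  | zero => rfl
  | succ n ih => rw [Function.iterate_succ_apply', eval, ih, Nat.add_assoc]

@[simp] theorem eval_const (c : ℕ) (φ : ℕ → ℕ) : (const c).eval φ = c := by
  simp [const, eval_succ_iterate, eval]

@[simp] theorem eval_atom (n i : ℕ) (φ : ℕ → ℕ) : (atom n i).eval φ = φ i + n := by
  simp [atom, eval_succ_iterate, eval]

theorem const_le_iff {c : ℕ} {r : Lvl} : const c ≤ r ↔ c ≤ r.eval 0 :=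
  ⟨fun h => by simpa using h 0,
    fun h φ => by simpa using h.trans (eval_mono (fun _ => Nat.zero_le _) r)⟩

theorem const_le_max_iff {c : ℕ} {a b : Lvl} :
    const c ≤ Lvl.max a b ↔ const c ≤ a ∨ const c ≤ b := by
  simp only [const_le_iff, eval_max, le_max_iff]

def consts : Lvl → ℕ
  | var _ => 0
  | zero => 0
  | succ l => consts l + 1
  | .max a b => Nat.max (consts a) (consts b)

def atoms : Lvl → List (ℕ × ℕ)
  | var i => [(0, i)]
  | zero => []
  | succ l => (atoms l).map fun a => (a.1 + 1, a.2)
  | .max a b => atoms a ++ atoms b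

theorem eval_le_iff {r : Lvl} {φ : ℕ → ℕ} {B : ℕ} :
    r.eval φ ≤ B ↔ consts r ≤ B ∧ ∀ a ∈ atoms r, φ a.2 + a.1 ≤ B := by
  induction r generalizing B with
  | var i => simp [eval, consts, atoms]
  | zero => simp [eval, consts, atoms]
  | succ l ih =>
    cases B with
    | zero => simp [eval, consts]
    | succ B =>
      simp only [eval, consts, atoms, List.forall_mem_map, ← Nat.add_assoc,
        Nat.add_le_add_iff_right, ih]
  | max a b iha ihb =>
    simp only [eval_max, consts, atoms, sup_le_iff, iha, ihb, List.forall_mem_append]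
    exact and_and_and_comm

theorem const_consts_le (l : Lvl) : const (consts l) ≤ l :=
  const_le_iff.2 (eval_le_iff.1 le_rfl).1

theorem atom_le_of_mem_atoms {l : Lvl} {a : ℕ × ℕ} (h : a ∈ atoms l) : atom a.1 a.2 ≤ l :=
  fun φ => by simpa [Nat.add_comm] using (eval_le_iff.1 le_rfl).2 a h

theorem le_iff_consts_atoms {l r : Lvl} :
    l ≤ r ↔ const (consts l) ≤ r ∧ ∀ a ∈ atoms l, atom a.1 a.2 ≤ r := by
  refine ⟨fun h => ⟨(const_consts_le l).trans h, fun a ha => (atom_le_of_mem_atoms ha).trans h⟩,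
    fun ⟨hc, ha⟩ φ => eval_le_iff.2 ⟨?_, fun a h => by simpa using ha a h φ⟩⟩
  exact (const_le_iff.1 hc).trans (eval_mono (fun _ => Nat.zero_le _) r)

theorem atom_le_iff {n v : ℕ} {r : Lvl} : atom n v ≤ r ↔ ∃ b ∈ atoms r, b.2 = v ∧ n ≤ b.1 := by
  refine ⟨fun h => ?_, fun ⟨b, hb, hv, hn⟩ φ => ?_⟩
  · -- evaluate at the assignment that is large at `v` and zero elsewhere
    by_contra! hlt
    set t := r.eval 0 + 1
    have hr0 := eval_le_iff.1 (le_refl (r.eval 0))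
    have hr : r.eval (fun i => if i = v then t else 0) ≤ t + n - 1 := by
      refine eval_le_iff.2 ⟨by omega, fun b hb => ?_⟩
      by_cases hv : b.2 = v
      · simp only [hv, if_true]; have := hlt b hb hv; omega
      · simp only [hv, if_false]; have := hr0.2 b hb; omega
    have := h (fun i => if i = v then t else 0)
    simp only [eval_atom, if_true] at this
    omega
  · have := (atom_le_of_mem_atoms hb) φ
    simp only [eval_atom, hv] at this ⊢
    omega

theorem atom_le_max_iff {n v : ℕ} {a b : Lvl} :
    atom n v ≤ Lvl.max a b ↔ atom n v ≤ a ∨ atom n v ≤ b := by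
  simp only [atom_le_iff, atoms, List.mem_append, or_and_right, exists_or]

theorem sup_le_iff {L : List Lvl} {r : Lvl} : sup L ≤ r ↔ ∀ l ∈ L, l ≤ r := by
  induction L with
  | nil => simpa [sup] using zero_le r
  | cons a L ih => simp [sup, max_le_iff, ← ih]

theorem le_sup {L : List Lvl} {l : Lvl} (h : l ∈ L) : l ≤ sup L := sup_le_iff.1 le_rfl l h

theorem atom_le_sup_iff {n v : ℕ} {L : List Lvl} : atom n v ≤ sup L ↔ ∃ l ∈ L, atom n v ≤ l := by
  induction L with
  | nil => simp [sup, atom_le_iff, atoms]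
  | cons a L ih => simp [sup, atom_le_max_iff, ← ih]

theorem const_le_sup_iff {c : ℕ} {L : List Lvl} :
    const c ≤ sup L ↔ c = 0 ∨ ∃ l ∈ L, const c ≤ l := by
  induction L with
  | nil => simp [sup, const_le_iff, eval]
  | cons a L ih =>
    simp only [sup, List.foldr_cons, const_le_max_iff, List.mem_cons, exists_eq_or_imp] at ih ⊢
    rw [ih, or_left_comm]

theorem subst_sup (θ : ℕ → Lvl) (L : List Lvl) : (sup L).subst θ = sup (L.map (subst θ)) := by
  induction L with
  | nil => rfl
  | cons a L ih => simp only [sup] at ih ⊢; simp [subst, ih]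

open Classical in
noncomputable def under (l r : Lvl) : Lvl :=
  Lvl.max (const (min (consts l) (r.eval 0)))
    (sup (((atoms l).filter fun a => atom a.1 a.2 ≤ r).map fun a => atom a.1 a.2))

theorem under_le_left (l r : Lvl) : under l r ≤ l := by
  refine max_le_iff.2 ⟨const_le_iff.2 ?_, sup_le_iff.2 ?_⟩
  · exact (min_le_left _ _).trans (const_le_iff.1 (const_consts_le l))
  · simp only [List.mem_map, List.mem_filter]
    rintro _ ⟨a, ⟨ha, -⟩, rfl⟩
    exact atom_le_of_mem_atoms ha

theorem under_le_right (l r : Lvl) : under l r ≤ r := by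
  refine max_le_iff.2 ⟨const_le_iff.2 (min_le_right _ _), sup_le_iff.2 ?_⟩
  simp only [List.mem_map, List.mem_filter, decide_eq_true_eq]
  rintro _ ⟨a, ⟨-, ha⟩, rfl⟩
  exact ha

theorem le_sup_under {l : Lvl} {τ : ℕ → Lvl} {B : List ℕ} (h : l ≤ sup (B.map τ)) :
    l ≤ sup (B.map fun j => under l (τ j)) := by
  refine le_iff_consts_atoms.2 ⟨?_, fun a ha => ?_⟩
  · rcases const_le_sup_iff.1 ((const_consts_le l).trans h) with h0 | ⟨_, hj, hc⟩
    · exact const_le_iff.2 (h0 ▸ Nat.zero_le _)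
    · obtain ⟨j, hjB, rfl⟩ := List.mem_map.1 hj
      refine le_trans ?_ (le_sup (List.mem_map_of_mem (f := fun j => under l (τ j)) hjB))
      refine le_trans ?_ (le_max_left _ _)
      rw [min_eq_left (const_le_iff.1 hc)]
  · obtain ⟨_, hj, hle⟩ := atom_le_sup_iff.1 ((atom_le_of_mem_atoms ha).trans h)
    obtain ⟨j, hjB, rfl⟩ := List.mem_map.1 hj
    refine le_trans ?_ (le_sup (List.mem_map_of_mem (f := fun j => under l (τ j)) hjB))
    refine le_trans ?_ (le_max_right _ _)
    exact le_sup (List.mem_map_of_mem (List.mem_filter.2 ⟨ha, by simpa using hle⟩))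

noncomputable def meet (l r : Lvl) : Lvl := Lvl.max (under l r) (under r l)

theorem meet_le_left (l r : Lvl) : meet l r ≤ l :=
  max_le_iff.2 ⟨under_le_left l r, under_le_right r l⟩

theorem meet_le_right (l r : Lvl) : meet l r ≤ r :=
  max_le_iff.2 ⟨under_le_right l r, under_le_left r l⟩

theorem under_le_meet (l r : Lvl) : under l r ≤ meet l r := le_max_left _ _

theorem under_le_meet_swap (l r : Lvl) : under l r ≤ meet r l := le_max_right _ _

theorem sup_equiv_of_covers {l : Lvl} {τ : ℕ → Lvl} {B : List ℕ} {M : List Lvl}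
    (hl : l ≤ sup (B.map τ)) (hM : ∀ m ∈ M, m ≤ l) (hcov : ∀ j ∈ B, ∃ m ∈ M, under l (τ j) ≤ m) :
    (sup M).Equiv l := by
  refine equiv_iff_le_and_le.2 ⟨sup_le_iff.2 hM, (le_sup_under hl).trans (sup_le_iff.2 ?_)⟩
  simp only [List.mem_map]
  rintro _ ⟨j, hj, rfl⟩
  obtain ⟨m, hm, hle⟩ := hcov j hj
  exact hle.trans (le_sup hm)

def flat (A : List ℕ) : Lvl := Lvl.max zero (sup (A.map var))

theorem subst_flat (θ : ℕ → Lvl) (A : List ℕ) :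
    (flat A).subst θ = Lvl.max zero (sup (A.map θ)) := by
  simp [flat, subst, subst_sup, Function.comp_def]

theorem unifies_flat_iff {θ : ℕ → Lvl} {A B : List ℕ} :
    Unifies θ (flat A) (flat B) ↔
      (∀ j ∈ A, θ j ≤ sup (B.map θ)) ∧ ∀ j ∈ B, θ j ≤ sup (A.map θ) := by
  have zero_max_le : ∀ a b : Lvl, Lvl.max zero a ≤ Lvl.max zero b ↔ a ≤ b := by
    simp [le_def, eval]
  simp [Unifies, equiv_iff_le_and_le, subst_flat, zero_max_le, sup_le_iff]

theorem mem_fv_flat {i : ℕ} {A : List ℕ} : i ∈ (flat A).fv ↔ i ∈ A := by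
  induction A with
  | nil => simp [flat, sup, fv]
  | cons a A ih => simp_all [flat, sup, fv]

end Lvl

namespace List

variable {α : Type*} {L : List α}

theorem getD_mem {k : ℕ} (hk : k < L.length) (d : α) : L.getD k d ∈ L := by
  rw [getD_eq_getElem _ _ hk]
  exact getElem_mem hk

theorem nodup_append_append_iff {l₁ l₂ l₃ : List α} :
    (l₁ ++ l₂ ++ l₃).Nodup ↔ l₁.Nodup ∧ l₂.Nodup ∧ l₃.Nodup ∧
      l₁.Disjoint l₂ ∧ l₁.Disjoint l₃ ∧ l₂.Disjoint l₃ := by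
  simp only [nodup_append', disjoint_append_left]
  tauto

variable [BEq α] [LawfulBEq α]

theorem getD_idxOf {a : α} (h : a ∈ L) (d : α) : L.getD (L.idxOf a) d = a := by
  rw [getD_eq_getElem _ _ (idxOf_lt_length_iff.2 h), getElem_idxOf]

theorem idxOf_getD (hL : L.Nodup) {k : ℕ} (hk : k < L.length) (d : α) :
    L.idxOf (L.getD k d) = k := by
  rw [getD_eq_getElem _ _ hk, hL.idxOf_getElem]

theorem mem_map_range_idxOf {β : Type*} {a : α} (h : a ∈ L) (g : ℕ → β) :
    g (L.idxOf a) ∈ (range L.length).map g :=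
  mem_map_of_mem (mem_range.2 (idxOf_lt_length_iff.2 h))

end List

namespace FlatMGU

open Lvl

variable (fresh : ℕ ⊕ ℕ × ℕ ⊕ ℕ × ℕ ⊕ ℕ × ℕ → ℕ)

def x (k : ℕ) : Lvl := var (fresh (.inl k))

def y (k n : ℕ) : Lvl := var (fresh (.inr (.inl (k, n))))

def z (k m : ℕ) : Lvl := var (fresh (.inr (.inr (.inl (k, m)))))

def v (n m : ℕ) : Lvl := var (fresh (.inr (.inr (.inr (n, m)))))

variable (i0 i1 i2 : List ℕ)

def mgu (j : ℕ) : Lvl :=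
  if j ∈ i0 then
    Lvl.max (x fresh (i0.idxOf j))
      (sup ((List.range i1.length).map (y fresh (i0.idxOf j)) ++
        (List.range i2.length).map (z fresh (i0.idxOf j))))
  else if j ∈ i1 then
    sup ((List.range i0.length).map (fun k => y fresh k (i1.idxOf j)) ++
      (List.range i2.length).map (v fresh (i1.idxOf j)))
  else if j ∈ i2 then
    sup ((List.range i0.length).map (fun k => z fresh k (i2.idxOf j)) ++
      (List.range i1.length).map (fun n => v fresh n (i2.idxOf j)))
  else var j

noncomputable def factor (τ : ℕ → Lvl) : ℕ → Lvl :=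
  Function.extend fresh (fun
    | .inl k => τ (i0.getD k 0)
    | .inr (.inl (k, n)) => meet (τ (i0.getD k 0)) (τ (i1.getD n 0))
    | .inr (.inr (.inl (k, m))) => meet (τ (i0.getD k 0)) (τ (i2.getD m 0))
    | .inr (.inr (.inr (n, m))) => meet (τ (i1.getD n 0)) (τ (i2.getD m 0))) var

variable {fresh i0 i1 i2}

theorem y_le_mgu (h0 : i0.Nodup) {k n : ℕ} (hk : k < i0.length) (hn : n < i1.length) :
    y fresh k n ≤ mgu fresh i0 i1 i2 (i0.getD k 0) := by
  rw [mgu, if_pos (List.getD_mem hk 0), List.idxOf_getD h0 hk]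
  exact (le_sup (List.mem_append_left _ (List.mem_map_of_mem (List.mem_range.2 hn)))).trans
    (le_max_right _ _)

theorem z_le_mgu (h0 : i0.Nodup) {k m : ℕ} (hk : k < i0.length) (hm : m < i2.length) :
    z fresh k m ≤ mgu fresh i0 i1 i2 (i0.getD k 0) := by
  rw [mgu, if_pos (List.getD_mem hk 0), List.idxOf_getD h0 hk]
  exact (le_sup (List.mem_append_right _ (List.mem_map_of_mem (List.mem_range.2 hm)))).trans
    (le_max_right _ _)

theorem v_le_mgu₁ (h1 : i1.Nodup) (h01 : i0.Disjoint i1) {n m : ℕ} (hn : n < i1.length)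
    (hm : m < i2.length) : v fresh n m ≤ mgu fresh i0 i1 i2 (i1.getD n 0) := by
  have hmem := List.getD_mem hn 0
  rw [mgu, if_neg (List.disjoint_right.1 h01 hmem), if_pos hmem, List.idxOf_getD h1 hn]
  exact le_sup (List.mem_append_right _ (List.mem_map_of_mem (List.mem_range.2 hm)))

theorem v_le_mgu₂ (h2 : i2.Nodup) (h02 : i0.Disjoint i2) (h12 : i1.Disjoint i2) {n m : ℕ}
    (hn : n < i1.length) (hm : m < i2.length) : v fresh n m ≤ mgu fresh i0 i1 i2 (i2.getD m 0) := by
  have hmem := List.getD_mem hm 0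
  rw [mgu, if_neg (List.disjoint_right.1 h02 hmem), if_neg (List.disjoint_right.1 h12 hmem),
    if_pos hmem, List.idxOf_getD h2 hm]
  exact le_sup (List.mem_append_right _
    (List.mem_map_of_mem (f := fun n => v fresh n m) (List.mem_range.2 hn)))

theorem mgu_unifies (hnd : (i0 ++ i1 ++ i2).Nodup) :
    Unifies (mgu fresh i0 i1 i2) (flat (i0 ++ i1)) (flat (i0 ++ i2)) := by
  obtain ⟨h0, h1, h2, h01, h02, h12⟩ := List.nodup_append_append_iff.1 hnd
  have le_sup_mgu {L : List ℕ} {j : ℕ} (h : j ∈ L) :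
      mgu fresh i0 i1 i2 j ≤ sup (L.map (mgu fresh i0 i1 i2)) :=
    le_sup (List.mem_map_of_mem h)
  refine unifies_flat_iff.2 ⟨fun j hj => ?_, fun j hj => ?_⟩ <;>
    rcases List.mem_append.1 hj with hj0 | hj
  · exact le_sup_mgu (List.mem_append_left _ hj0)
  · have hn := List.idxOf_lt_length_iff.2 hj
    rw [mgu, if_neg (List.disjoint_right.1 h01 hj), if_pos hj, sup_le_iff]
    simp only [List.mem_append, List.mem_map, List.mem_range]
    rintro _ (⟨k, hk, rfl⟩ | ⟨m, hm, rfl⟩)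
    · exact (y_le_mgu h0 hk hn).trans (le_sup_mgu (List.mem_append_left _ (List.getD_mem hk 0)))
    · exact (v_le_mgu₂ h2 h02 h12 hn hm).trans
        (le_sup_mgu (List.mem_append_right _ (List.getD_mem hm 0)))
  · exact le_sup_mgu (List.mem_append_left _ hj0)
  · have hm := List.idxOf_lt_length_iff.2 hj
    rw [mgu, if_neg (List.disjoint_right.1 h02 hj), if_neg (List.disjoint_right.1 h12 hj),
      if_pos hj, sup_le_iff]
    simp only [List.mem_append, List.mem_map, List.mem_range]
    rintro _ (⟨k, hk, rfl⟩ | ⟨n, hn, rfl⟩)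
    · exact (z_le_mgu h0 hk hm).trans (le_sup_mgu (List.mem_append_left _ (List.getD_mem hk 0)))
    · exact (v_le_mgu₁ h1 h01 hn hm).trans
        (le_sup_mgu (List.mem_append_right _ (List.getD_mem hn 0)))

section Factor

variable {τ : ℕ → Lvl}

theorem mgu_subst_factor_of_mem₀ (hinj : Function.Injective fresh) {j : ℕ} (hj : j ∈ i0) :
    ((mgu fresh i0 i1 i2 j).subst (factor fresh i0 i1 i2 τ)).Equiv (τ j) := by
  simp only [mgu, if_pos hj, subst, subst_sup, List.map_append, List.map_map, Function.comp_def,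
    x, y, z, factor, hinj.extend_apply, List.getD_idxOf hj]
  refine max_equiv_left (sup_le_iff.2 ?_)
  simp only [List.mem_append, List.mem_map, List.mem_range]
  rintro _ (⟨n, -, rfl⟩ | ⟨m, -, rfl⟩) <;> exact meet_le_left _ _

theorem mgu_subst_factor_of_mem₁ (hinj : Function.Injective fresh)
    (hτ : Unifies τ (flat (i0 ++ i1)) (flat (i0 ++ i2))) {j : ℕ}
    (hj0 : j ∉ i0) (hj : j ∈ i1) :
    ((mgu fresh i0 i1 i2 j).subst (factor fresh i0 i1 i2 τ)).Equiv (τ j) := by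
  simp only [mgu, if_neg hj0, if_pos hj, subst_sup, List.map_append, List.map_map,
    Function.comp_def, y, v, subst, factor, hinj.extend_apply, List.getD_idxOf hj]
  refine sup_equiv_of_covers ((unifies_flat_iff.1 hτ).1 j (List.mem_append_right _ hj)) ?_ ?_
  · simp only [List.mem_append, List.mem_map, List.mem_range]
    rintro _ (⟨k, -, rfl⟩ | ⟨m, -, rfl⟩)
    exacts [meet_le_right _ _, meet_le_left _ _]
  · intro j' hj'
    rcases List.mem_append.1 hj' with hj' | hj'
    · refine ⟨_, List.mem_append_left _ (List.mem_map_range_idxOf hj' _), ?_⟩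
      simpa only [List.getD_idxOf hj'] using under_le_meet_swap _ _
    · refine ⟨_, List.mem_append_right _ (List.mem_map_range_idxOf hj' _), ?_⟩
      simpa only [List.getD_idxOf hj'] using under_le_meet _ _

theorem mgu_subst_factor_of_mem₂ (hinj : Function.Injective fresh)
    (hτ : Unifies τ (flat (i0 ++ i1)) (flat (i0 ++ i2))) {j : ℕ}
    (hj0 : j ∉ i0) (hj1 : j ∉ i1) (hj : j ∈ i2) :
    ((mgu fresh i0 i1 i2 j).subst (factor fresh i0 i1 i2 τ)).Equiv (τ j) := by
  simp only [mgu, if_neg hj0, if_neg hj1, if_pos hj, subst_sup, List.map_append, List.map_map,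
    Function.comp_def, z, v, subst, factor, hinj.extend_apply, List.getD_idxOf hj]
  refine sup_equiv_of_covers ((unifies_flat_iff.1 hτ).2 j (List.mem_append_right _ hj)) ?_ ?_
  · simp only [List.mem_append, List.mem_map, List.mem_range]
    rintro _ (⟨k, -, rfl⟩ | ⟨n, -, rfl⟩) <;> exact meet_le_right _ _
  · intro j' hj'
    rcases List.mem_append.1 hj' with hj' | hj'
    · refine ⟨_, List.mem_append_left _ (List.mem_map_range_idxOf hj' _), ?_⟩
      simpa only [List.getD_idxOf hj'] using under_le_meet_swap _ _
    · refine ⟨_, List.mem_append_right _ (List.mem_map_range_idxOf hj' _), ?_⟩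
      simpa only [List.getD_idxOf hj'] using under_le_meet_swap _ _

end Factor

end FlatMGU

theorem mgu_flat_equation_general (i0 i1 i2 : List ℕ) (hnd : (i0 ++ i1 ++ i2).Nodup)
    (fresh : ℕ ⊕ ℕ × ℕ ⊕ ℕ × ℕ ⊕ ℕ × ℕ → ℕ)
    (hinj : Function.Injective fresh) :
    IsMGU
      (fun j =>
        if j ∈ i0 then
          let k := i0.idxOf j
          Lvl.max (Lvl.var (fresh (Sum.inl k)))
            (sup ((List.range i1.length).map
                    (fun n => Lvl.var (fresh (Sum.inr (Sum.inl (k, n))))) ++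
                  (List.range i2.length).map
                    (fun m => Lvl.var (fresh (Sum.inr (Sum.inr (Sum.inl (k, m))))))))
        else if j ∈ i1 then
          let n := i1.idxOf j
          sup ((List.range i0.length).map
                 (fun k => Lvl.var (fresh (Sum.inr (Sum.inl (k, n))))) ++
               (List.range i2.length).map
                 (fun m => Lvl.var (fresh (Sum.inr (Sum.inr (Sum.inr (n, m)))))))
        else if j ∈ i2 then
          let m := i2.idxOf j
          sup ((List.range i0.length).map
                 (fun k => Lvl.var (fresh (Sum.inr (Sum.inr (Sum.inl (k, m)))))) ++
               (List.range i1.length).map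
                 (fun n => Lvl.var (fresh (Sum.inr (Sum.inr (Sum.inr (n, m)))))))
        else Lvl.var j)
      (Lvl.max Lvl.zero (sup ((i0 ++ i1).map Lvl.var)))
      (Lvl.max Lvl.zero (sup ((i0 ++ i2).map Lvl.var))) := by
  show IsMGU (FlatMGU.mgu fresh i0 i1 i2) (Lvl.flat (i0 ++ i1)) (Lvl.flat (i0 ++ i2))
  obtain ⟨-, -, -, h01, h02, h12⟩ := List.nodup_append_append_iff.1 hnd
  refine ⟨FlatMGU.mgu_unifies hnd, fun τ hτ => ⟨FlatMGU.factor fresh i0 i1 i2 τ, fun j hj => ?_⟩⟩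
  simp only [Finset.mem_union, Lvl.mem_fv_flat, List.mem_append] at hj
  rcases hj with (hj | hj) | (hj | hj)
  · exact FlatMGU.mgu_subst_factor_of_mem₀ hinj hj
  · exact FlatMGU.mgu_subst_factor_of_mem₁ hinj hτ (List.disjoint_right.1 h01 hj) hj
  · exact FlatMGU.mgu_subst_factor_of_mem₀ hinj hj
  · exact FlatMGU.mgu_subst_factor_of_mem₂ hinj hτ (List.disjoint_right.1 h02 hj)
      (List.disjoint_right.1 h12 hj) hj

/-- Let `i₀, i₁, i₂` be pairwise disjoint lists of distinct level variables.  The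
flat level equation `0 ⊔ i₀ ⊔ i₁ ≐ 0 ⊔ i₀ ⊔ i₂` admits as a most general unifier
the substitution `θ` mapping `i₀ᵏ ↦ x_k ⊔ (⊔_n y_{k,n}) ⊔ (⊔_m z_{k,m})`,
`i₁ⁿ ↦ (⊔_k y_{k,n}) ⊔ (⊔_m v_{n,m})` and `i₂ᵐ ↦ (⊔_k z_{k,m}) ⊔ (⊔_n v_{n,m})`,
where the `x, y, z, v` are pairwise distinct fresh variables (encoded via an
injective function `fresh` whose range avoids the variables of the equation). -/
theorem mgu_flat_equation (i0 i1 i2 : List ℕ) (hnd : (i0 ++ i1 ++ i2).Nodup)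
    (fresh : ℕ ⊕ ℕ × ℕ ⊕ ℕ × ℕ ⊕ ℕ × ℕ → ℕ)
    (hinj : Function.Injective fresh)
    (hfresh : ∀ a, fresh a ∉ i0 ++ i1 ++ i2) :
    IsMGU
      (fun j =>
        if j ∈ i0 then
          let k := i0.idxOf j
          Lvl.max (Lvl.var (fresh (Sum.inl k)))
            (sup ((List.range i1.length).map
                    (fun n => Lvl.var (fresh (Sum.inr (Sum.inl (k, n))))) ++
                  (List.range i2.length).map
                    (fun m => Lvl.var (fresh (Sum.inr (Sum.inr (Sum.inl (k, m))))))))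
        else if j ∈ i1 then
          let n := i1.idxOf j
          sup ((List.range i0.length).map
                 (fun k => Lvl.var (fresh (Sum.inr (Sum.inl (k, n))))) ++
               (List.range i2.length).map
                 (fun m => Lvl.var (fresh (Sum.inr (Sum.inr (Sum.inr (n, m)))))))
        else if j ∈ i2 then
          let m := i2.idxOf j
          sup ((List.range i0.length).map
                 (fun k => Lvl.var (fresh (Sum.inr (Sum.inr (Sum.inl (k, m)))))) ++
               (List.range i1.length).map
                 (fun n => Lvl.var (fresh (Sum.inr (Sum.inr (Sum.inr (n, m)))))))
        else Lvl.var j)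
      (Lvl.max Lvl.zero (sup ((i0 ++ i1).map Lvl.var)))
      (Lvl.max Lvl.zero (sup ((i0 ++ i2).map Lvl.var))) :=
  mgu_flat_equation_general i0 i1 i2 hnd fresh hinj
end

section
/- Suppose a level equation l₁ ≐ l₂ admits a unifier θ and a most general unifier τ. If i is a variable of the equation with i[θ] ≃ 0, then i[τ] is flat, i.e., contains no occurrence of the successor S. -/
/-- A level is flat when it contains no occurrence of the successor `S`. -/
def Lvl.Flat : Lvl → Prop
  | .var _ => True
  | .zero => True
  | .succ _ => False
  | .max a b => a.Flat ∧ b.Flat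

/-!
Instantiating the most general unifier `τ` by the substitution `θ'` through which `θ` factors
gives a level `(i[τ])[θ'] ≃ i[θ] ≃ 0`. A level containing `S` evaluates to at least `1` under
every assignment, and so does each of its instances; hence `i[τ]` is flat.
-/

namespace Lvl

theorem eval_subst (σ : ℕ → Lvl) (φ : ℕ → ℕ) (l : Lvl) :
    (l.subst σ).eval φ = l.eval fun j => (σ j).eval φ := by
  induction l with
  | var _ | zero => rfl
  | succ l ih => simp only [subst, eval, ih]
  | max a b iha ihb => simp only [subst, eval, iha, ihb]

theorem flat_of_eval_eq_zero {l : Lvl} {φ : ℕ → ℕ} (h : l.eval φ = 0) : l.Flat := by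
  induction l with
  | var _ | zero => trivial
  | succ _ _ => simp [eval] at h
  | max a b iha ihb =>
    simp only [eval, Nat.max_def] at h
    split_ifs at h <;> exact ⟨iha (by omega), ihb (by omega)⟩

theorem flat_of_subst_equiv_zero {l : Lvl} {σ : ℕ → Lvl} (h : (l.subst σ).Equiv zero) :
    l.Flat :=
  flat_of_eval_eq_zero (φ := fun j => (σ j).eval fun _ => 0) <| by
    rw [← eval_subst, h]; rfl

end Lvl

/-- If a level equation admits a unifier `θ` and a most general unifier `τ`, and
`i` is a variable of the equation with `i[θ] ≃ 0`, then `i[τ]` is flat. -/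
theorem mgu_flat_of_unifier_zero (l₁ l₂ : Lvl) (θ τ : ℕ → Lvl)
    (hθ : Unifies θ l₁ l₂) (hτ : IsMGU τ l₁ l₂)
    (i : ℕ) (hi : i ∈ l₁.fv ∪ l₂.fv) (h0 : Lvl.Equiv (θ i) Lvl.zero) :
    (τ i).Flat := by
  obtain ⟨θ', hθ'⟩ := hτ.2 θ hθ
  exact Lvl.flat_of_subst_equiv_zero fun φ => (hθ' i hi φ).trans (h0 φ)
end
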